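/- Let z₁ ∈ ℝ, let φ₁ : ℝ → ℝ be three times continuously differentiable, let φ₂ : ℝ → ℝ be twice continuously differentiable, and let f : ℝ × ℝ → ℝ be continuously differentiable with continuous second partial derivative in the second (space) variable. Define u : ℝ × ℝ → ℝ by u(t,x) = φ₁(x + z₁t) + t·φ₂(x + z₁t) − z₁·t·φ₁'(x + z₁t) + ∫₀ᵗ (t−s)·f(s, x + z₁(t−s)) ds. Then u satisfies the partial differential equation ∂²u/∂t² − 2z₁·∂²u/∂t∂x + z₁²·∂²u/∂x² = f(t,x) for all (t,x), together with the initial conditions u(0,x) = φ₁(x) and (∂u/∂t)(0,x) = φ₂(x) for all x ∈ ℝ. (Example 1 of the paper: the explicit solution of u_tt + a₁u_tx + a₂u_xx = f when the characteristic polynomial z² + a₁z + a₂ has the double root z₁, i.e. a₁ = −2z₁ and a₂ = z₁².) -/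

import Mathlib

/-!
In the characteristic coordinate `y = x + z₁ t` the operator `(∂ₜ - z₁ ∂ₓ)²` becomes `∂ₜ²`, and
`u t x = v t (x + z₁ t)` with `v t y = φ₁ y + t ψ y + ∫₀ᵗ (t - s) g(s, y) ds`, where
`ψ = φ₂ - z₁ φ₁'` and `g(s, y) = f(s, y - z₁ s)`. This `v` solves `∂ₜ² v = g` by Duhamel's
principle, so `u` solves the equation; the initial data are read off at `t = 0`.
To run the chain rule we need `v`, `∂ₜ v` and `∂_y v` jointly differentiable; for the integral
terms this follows from the continuity of their partial derivatives.
-/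

open Function intervalIntegral ContinuousLinearMap Filter Metric

section ParametricIntegral

variable {h h' : ℝ → ℝ → ℝ}

theorem hasDerivAt_intervalIntegral_of_continuous_deriv (hc : Continuous ↿h)
    (hc' : Continuous ↿h') (hd : ∀ s y, HasDerivAt (h s) (h' s y) y) (a b y₀ : ℝ) :
    HasDerivAt (fun y => ∫ s in a..b, h s y) (∫ s in a..b, h' s y₀) y₀ := by
  obtain ⟨M, hM⟩ := (isCompact_uIcc.prod (isCompact_closedBall y₀ 1)).exists_bound_of_continuousOn
    hc'.continuousOn
  refine (hasDerivAt_integral_of_dominated_loc_of_deriv_le (F := fun y s => h s y)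
    (F' := fun y s => h' s y) (bound := fun _ => M) (ball_mem_nhds y₀ one_pos)
    (Eventually.of_forall fun y => (hc.uncurry_right y).aestronglyMeasurable)
    ((hc.uncurry_right y₀).intervalIntegrable _ _)
    (hc'.uncurry_right y₀).aestronglyMeasurable ?_ intervalIntegrable_const
    (Eventually.of_forall fun s _ y _ => hd s y)).2
  exact Eventually.of_forall fun s hs y hy =>
    hM (s, y) ⟨Set.uIoc_subset_uIcc hs, ball_subset_closedBall hy⟩

def HasPartialDerivs (W Wt Wy : ℝ → ℝ → ℝ) : Prop :=
  ∀ t y, HasFDerivAt ↿W ((toSpanSingleton ℝ (Wt t y)).coprod (toSpanSingleton ℝ (Wy t y))) (t, y)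

theorem hasPartialDerivs_primitive (hc : Continuous ↿h) (hc' : Continuous ↿h')
    (hd : ∀ s y, HasDerivAt (h s) (h' s y) y) :
    HasPartialDerivs (fun t y => ∫ s in (0:ℝ)..t, h s y) h
      (fun t y => ∫ s in (0:ℝ)..t, h' s y) := fun t y =>
  (hasStrictFDerivAt_uncurry_coprod (u := (t, y)) (f := fun t y => ∫ s in (0:ℝ)..t, h s y)
    (f₁ := fun t y => toSpanSingleton ℝ (h t y))
    (f₂ := fun t y => toSpanSingleton ℝ (∫ s in (0:ℝ)..t, h' s y))
    (Eventually.of_forall fun p =>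
      ((hc.uncurry_right p.2).integral_hasStrictDerivAt 0 p.1).hasDerivAt.hasFDerivAt)
    (Eventually.of_forall fun p =>
      (hasDerivAt_intervalIntegral_of_continuous_deriv hc hc' hd 0 p.1 p.2).hasFDerivAt)
    (toSpanSingletonCLE.continuous.comp hc).continuousAt
    (toSpanSingletonCLE.continuous.comp
      (continuous_parametric_intervalIntegral_of_continuous (f := fun (p : ℝ × ℝ) s => h' s p.2)
        (hc'.comp (continuous_snd.prodMk continuous_fst.snd)) continuous_fst)).continuousAt
    ).hasFDerivAt

end ParametricIntegral

namespace HasPartialDerivs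

variable {W V Wt Wy Vt Vy : ℝ → ℝ → ℝ}

theorem add (hW : HasPartialDerivs W Wt Wy) (hV : HasPartialDerivs V Vt Vy) :
    HasPartialDerivs (fun t y => W t y + V t y) (fun t y => Wt t y + Vt t y)
      (fun t y => Wy t y + Vy t y) := fun t y =>
  ((hW t y).add (hV t y)).congr_fderiv (by ext <;> simp)

theorem sub (hW : HasPartialDerivs W Wt Wy) (hV : HasPartialDerivs V Vt Vy) :
    HasPartialDerivs (fun t y => W t y - V t y) (fun t y => Wt t y - Vt t y)
      (fun t y => Wy t y - Vy t y) := fun t y =>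
  ((hW t y).sub (hV t y)).congr_fderiv (by ext <;> simp)

theorem fst_mul (hW : HasPartialDerivs W Wt Wy) :
    HasPartialDerivs (fun t y => t * W t y) (fun t y => W t y + t * Wt t y)
      (fun t y => t * Wy t y) := fun t y =>
  (hasFDerivAt_fst.mul (hW t y)).congr_fderiv (by ext <;> simp; exact add_comm _ _)

theorem of_hasDerivAt_snd {Φ Φ' : ℝ → ℝ} (hΦ : ∀ y, HasDerivAt Φ (Φ' y) y) :
    HasPartialDerivs (fun _ y => Φ y) (fun _ _ => 0) (fun _ y => Φ' y) := fun t y =>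
  ((hΦ (t, y).2).hasFDerivAt.comp (t, y) hasFDerivAt_snd).congr_fderiv (by ext <;> simp)

theorem hasDerivAt_along_characteristic (hW : HasPartialDerivs W Wt Wy) (c x t : ℝ) :
    HasDerivAt (fun τ => W τ (x + c * τ)) (Wt t (x + c * t) + c * Wy t (x + c * t)) t := by
  have hpath : HasDerivAt (fun τ : ℝ => (τ, x + c * τ)) (1, c) t :=
    (hasDerivAt_id t).prodMk (by simpa using ((hasDerivAt_id t).const_mul c).const_add x)
  have h := (hW t (x + c * t)).comp_hasDerivAt t hpath
  simp only [coprod_apply, toSpanSingleton_apply, smul_eq_mul, one_mul] at h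
  exact h

theorem hasDerivAt_snd_shift (hW : HasPartialDerivs W Wt Wy) (c t x : ℝ) :
    HasDerivAt (fun ξ => W t (ξ + c * t)) (Wy t (x + c * t)) x := by
  have hpath : HasDerivAt (fun ξ : ℝ => (t, ξ + c * t)) (0, 1) x :=
    (hasDerivAt_const x t).prodMk ((hasDerivAt_id x).add_const _)
  have h := (hW t (x + c * t)).comp_hasDerivAt x hpath
  simp only [coprod_apply, toSpanSingleton_apply, smul_eq_mul, zero_mul, one_mul, zero_add] at h
  exact h

/-- Sharing `M` between `hP` and `hQ` says `∂_y P = ∂ₜ Q`: the mixed terms then cancel. -/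
theorem wave_operator_eq {P Q Ptt M Qyy : ℝ → ℝ → ℝ} (c : ℝ) (hW : HasPartialDerivs W P Q)
    (hP : HasPartialDerivs P Ptt M) (hQ : HasPartialDerivs Q M Qyy) {u : ℝ → ℝ → ℝ}
    (hu : ∀ t x, u t x = W t (x + c * t)) (t x : ℝ) :
    deriv (fun τ => deriv (fun σ => u σ x) τ) t
        - 2 * c * deriv (fun τ => deriv (fun ξ => u τ ξ) x) t
        + c ^ 2 * deriv (deriv (u t)) x = Ptt t (x + c * t) := by
  have hu_t : (fun τ => deriv (fun σ => u σ x) τ)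
      = fun τ => P τ (x + c * τ) + c * Q τ (x + c * τ) := by
    simp_rw [hu]
    exact funext fun τ => (hW.hasDerivAt_along_characteristic c x τ).deriv
  have hu_x : ∀ τ, deriv (fun ξ => u τ ξ) = fun ξ => Q τ (ξ + c * τ) := by
    simp_rw [hu]
    exact fun τ => funext fun ξ => (hW.hasDerivAt_snd_shift c τ ξ).deriv
  have hu_tt : HasDerivAt (fun τ => P τ (x + c * τ) + c * Q τ (x + c * τ)) _ t :=
    (hP.hasDerivAt_along_characteristic c x t).add
      ((hQ.hasDerivAt_along_characteristic c x t).const_mul c)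
  simp only [hu_t, hu_x]
  rw [hu_tt.deriv, (hQ.hasDerivAt_along_characteristic c x t).deriv,
    (hQ.hasDerivAt_snd_shift c t x).deriv]
  ring

end HasPartialDerivs

theorem intervalIntegral_sub_mul_eq {k : ℝ → ℝ} (hk : Continuous k) (t : ℝ) :
    ∫ s in (0:ℝ)..t, (t - s) * k s = t * (∫ s in (0:ℝ)..t, k s) - ∫ s in (0:ℝ)..t, s * k s := by
  simp_rw [sub_mul]
  rw [integral_sub (f := fun s => t * k s) (g := fun s => s * k s)
    ((continuous_const.mul hk).intervalIntegrable _ _)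
    ((continuous_id.mul hk).intervalIntegrable _ _), intervalIntegral.integral_const_mul]

/-- The solution of `∂ₜ² v = k`, `v 0 = Φ`, `∂ₜ v 0 = Ψ`. -/
noncomputable def duhamel (Φ Ψ : ℝ → ℝ) (k : ℝ → ℝ → ℝ) (t y : ℝ) : ℝ :=
  Φ y + t * Ψ y + ∫ s in (0:ℝ)..t, (t - s) * k s y

section Duhamel

variable {Φ Φ' Ψ Ψ' : ℝ → ℝ} {k k' : ℝ → ℝ → ℝ}

theorem hasPartialDerivs_duhamel (hΦ : ∀ y, HasDerivAt Φ (Φ' y) y)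
    (hΨ : ∀ y, HasDerivAt Ψ (Ψ' y) y) (hk : Continuous ↿k) (hk' : Continuous ↿k')
    (hkk' : ∀ s y, HasDerivAt (k s) (k' s y) y) :
    HasPartialDerivs (duhamel Φ Ψ k) (fun t y => Ψ y + ∫ s in (0:ℝ)..t, k s y)
      (duhamel Φ' Ψ' k') := by
  -- splitting `(t - s) k = t k - s k` makes the integrands independent of `t`
  have hsk : Continuous ↿(fun s y => s * k s y) := continuous_fst.mul hk
  have hsk' : Continuous ↿(fun s y => s * k' s y) := continuous_fst.mul hk'
  have hdata := (HasPartialDerivs.of_hasDerivAt_snd hΦ).add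
    (HasPartialDerivs.of_hasDerivAt_snd hΨ).fst_mul
  have hint := (hasPartialDerivs_primitive hk hk' hkk').fst_mul.sub
    (hasPartialDerivs_primitive hsk hsk' fun s y => (hkk' s y).const_mul s)
  convert hdata.add hint using 1 <;> funext t y
  · rw [duhamel, intervalIntegral_sub_mul_eq (hk.uncurry_right y)]
  · ring
  · rw [duhamel, intervalIntegral_sub_mul_eq (hk'.uncurry_right y)]

theorem duhamel_along_characteristics_solves {Φ'' Ψ'' : ℝ → ℝ} {k'' : ℝ → ℝ → ℝ} (c : ℝ)
    (hΦ : ∀ y, HasDerivAt Φ (Φ' y) y) (hΦ' : ∀ y, HasDerivAt Φ' (Φ'' y) y)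
    (hΨ : ∀ y, HasDerivAt Ψ (Ψ' y) y) (hΨ' : ∀ y, HasDerivAt Ψ' (Ψ'' y) y)
    (hk : Continuous ↿k) (hk' : Continuous ↿k') (hk'' : Continuous ↿k'')
    (hkk' : ∀ s y, HasDerivAt (k s) (k' s y) y) (hk'k'' : ∀ s y, HasDerivAt (k' s) (k'' s y) y)
    {u : ℝ → ℝ → ℝ} (hu : ∀ t x, u t x = duhamel Φ Ψ k t (x + c * t)) (t x : ℝ) :
    (deriv (fun τ => deriv (fun σ => u σ x) τ) t
        - 2 * c * deriv (fun τ => deriv (fun ξ => u τ ξ) x) t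
        + c ^ 2 * deriv (deriv (u t)) x = k t (x + c * t))
      ∧ u 0 x = Φ x
      ∧ deriv (fun τ => u τ x) 0 = Ψ x + c * Φ' x := by
  have hW := hasPartialDerivs_duhamel hΦ hΨ hk hk' hkk'
  have hP := (HasPartialDerivs.of_hasDerivAt_snd hΨ).add (hasPartialDerivs_primitive hk hk' hkk')
  have hQ := hasPartialDerivs_duhamel hΦ' hΨ' hk' hk'' hk'k''
  refine ⟨by simpa using hW.wave_operator_eq c hP hQ hu t x, by simp [hu, duhamel], ?_⟩
  rw [show (fun τ => u τ x) = fun τ => duhamel Φ Ψ k τ (x + c * τ) from funext (hu · x),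
    (hW.hasDerivAt_along_characteristic c x 0).deriv]
  simp [duhamel]

end Duhamel

section Uncurry

variable {f : ℝ → ℝ → ℝ}

theorem Continuous.uncurry_shear (hf : Continuous ↿f) (c : ℝ) :
    Continuous ↿(fun s y => f s (y - c * s)) :=
  hf.comp (by fun_prop : Continuous fun p : ℝ × ℝ => (p.1, p.2 - c * p.1))

theorem Differentiable.hasDerivAt_right (hf : Differentiable ℝ ↿f) (s x : ℝ) :
    HasDerivAt (f s) (fderiv ℝ ↿f (s, x) (0, 1)) x :=
  (hf (s, x)).hasFDerivAt.comp_hasDerivAt x ((hasDerivAt_const x s).prodMk (hasDerivAt_id x))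

theorem ContDiff.continuous_uncurry_deriv_right (hf : ContDiff ℝ 1 ↿f) :
    Continuous ↿(fun s x => deriv (f s) x) := by
  simp_rw [fun s x => ((hf.differentiable one_ne_zero).hasDerivAt_right s x).deriv]
  exact (hf.continuous_fderiv one_ne_zero).clm_apply continuous_const

end Uncurry

/-- **Example 1 of the paper:** the explicit solution of
`u_tt − 2z₁ u_tx + z₁² u_xx = f` (double characteristic root `z₁`) with initial data
`u(0,x) = φ₁(x)`, `u_t(0,x) = φ₂(x)`, given by
`u(t,x) = φ₁(x+z₁t) + t·φ₂(x+z₁t) − z₁t·φ₁'(x+z₁t) + ∫₀ᵗ (t−s)·f(s, x+z₁(t−s)) ds`. -/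
theorem example1_double_root (z₁ : ℝ) (φ₁ φ₂ : ℝ → ℝ) (f : ℝ → ℝ → ℝ)
    (hφ₁ : ContDiff ℝ 3 φ₁) (hφ₂ : ContDiff ℝ 2 φ₂)
    (hf : ContDiff ℝ 1 (Function.uncurry f))
    (hfx : ∀ t, Differentiable ℝ (deriv (f t)))
    (hfxx : Continuous (Function.uncurry fun t x => deriv (deriv (f t)) x))
    (u : ℝ → ℝ → ℝ)
    (hu : ∀ t x, u t x = φ₁ (x + z₁ * t) + t * φ₂ (x + z₁ * t)
        - z₁ * t * deriv φ₁ (x + z₁ * t)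
        + ∫ s in (0:ℝ)..t, (t - s) * f s (x + z₁ * (t - s))) :
    ∀ t x,
      (deriv (fun τ => deriv (fun σ => u σ x) τ) t
          - 2 * z₁ * deriv (fun τ => deriv (fun ξ => u τ ξ) x) t
          + z₁ ^ 2 * deriv (deriv (u t)) x = f t x)
        ∧ u 0 x = φ₁ x
        ∧ deriv (fun τ => u τ x) 0 = φ₂ x := by
  have hφ₁' : ContDiff ℝ 2 (deriv φ₁) := hφ₁.deriv'
  set Ψ : ℝ → ℝ := fun y => φ₂ y - z₁ * deriv φ₁ y with hΨ_def
  have hΨ : ContDiff ℝ 2 Ψ := hφ₂.sub (contDiff_const.mul hφ₁')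
  have hΨ' : ContDiff ℝ 1 (deriv Ψ) := hΨ.deriv'
  have hu' : ∀ t x, u t x = duhamel φ₁ Ψ (fun s y => f s (y - z₁ * s)) t (x + z₁ * t) := by
    intro t x
    rw [hu, duhamel]
    congr 1
    · ring
    · exact integral_congr fun s _ => by ring_nf
  have hfd : ∀ s x, HasDerivAt (f s) (deriv (f s) x) x := fun s x =>
    ((hf.differentiable one_ne_zero).hasDerivAt_right s x).differentiableAt.hasDerivAt
  intro t x
  obtain ⟨hpde, hu₀, hut₀⟩ := duhamel_along_characteristics_solves z₁
    (fun y => (hφ₁.differentiable (by norm_num) y).hasDerivAt)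
    (fun y => (hφ₁'.differentiable (by norm_num) y).hasDerivAt)
    (fun y => (hΨ.differentiable (by norm_num) y).hasDerivAt)
    (fun y => (hΨ'.differentiable (by norm_num) y).hasDerivAt)
    (hf.continuous.uncurry_shear z₁) (hf.continuous_uncurry_deriv_right.uncurry_shear z₁)
    (hfxx.uncurry_shear z₁)
    (fun s y => (hfd s _).comp_sub_const y (z₁ * s))
    (fun s y => (hfx s _).hasDerivAt.comp_sub_const y (z₁ * s)) hu' t x
  refine ⟨by simpa using hpde, hu₀, by rw [hut₀, hΨ_def]; ring⟩
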